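/- For every connected graph G on n ≥ 2 vertices, the conflict-free connection number satisfies 1 ≤ cfc(G) ≤ α(G) ≤ n−1, where α(G) is the independence number. -/

import Mathlib

/-!
We prove `cfc(G) ≤ α(G)` for the subgraph induced on any connected vertex set `S`, by induction
on `|S|`. Walks "inside `S`" are walks of `G` whose support lies in `S`.

If some bridge `ab` of `G[S]` has at least two vertices on each side, colour both sides
inductively from one palette and give `ab` a fresh colour. An independent set of one side plus a
vertex of the other side different from its end of `ab` is independent, so `α(G[S])` exceeds the
palette of either side.

Otherwise every bridge is a pendant edge, and unless `G[S]` is complete, the vertices with two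
neighbours in `S` form a bridgeless core `H` while the remaining vertices are pairwise
non-adjacent leaves hanging from `H`. Growing `H` by ears, we colour it with `0` and `1` so that
any two vertices of `H` are joined inside `H` both by a path with no edge of colour `1` and by one
with exactly one. The pendant edges receive pairwise distinct colours, and the paths with no or
one `1`-edge let every pendant colour, or colour `1`, occur exactly once.
-/

open SimpleGraph

/-- An edge coloring `c` makes `G` conflict-free connected: every two distinct
vertices are joined by a path containing a color used on exactly one of its edges. -/
def IsCFConnColoring {V : Type*} (G : SimpleGraph V) (c : Sym2 V → ℕ) : Prop :=
  ∀ u v : V, u ≠ v → ∃ p : G.Walk u v, p.IsPath ∧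
    ∃ col : ℕ, (p.edges.filter (fun e => c e = col)).length = 1

/-- The conflict-free connection number: the minimum number of colors in a
conflict-free connection coloring. -/
noncomputable def cfcNum {V : Type*} (G : SimpleGraph V) : ℕ :=
  sInf {k | ∃ c : Sym2 V → ℕ, (∀ e, c e < k) ∧ IsCFConnColoring G c}

/-- The independence number: the maximum size of a set of pairwise non-adjacent vertices. -/
noncomputable def indepNum {V : Type*} [Fintype V] (G : SimpleGraph V) : ℕ :=
  sSup {n | ∃ s : Finset V, (↑s : Set V).Pairwise (fun a b => ¬ G.Adj a b) ∧ s.card = n}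

lemma Set.exists_injOn_lt_ncard {α : Type*} [Finite α] (s : Set α) :
    ∃ f : α → ℕ, s.InjOn f ∧ ∀ x ∈ s, f x < s.ncard := by
  classical
  let e := Finite.equivFin s
  refine ⟨fun x => if h : x ∈ s then e ⟨x, h⟩ else 0, fun x hx y hy hxy => ?_, fun x hx => ?_⟩
  · simp only [hx, hy, dite_true, Fin.val_inj] at hxy
    exact congrArg Subtype.val (e.injective hxy)
  · simp [hx]

namespace SimpleGraph

variable {V : Type*} {G : SimpleGraph V}

namespace Walk

def colorCount (c : Sym2 V → ℕ) (i : ℕ) {u v : V} (p : G.Walk u v) : ℕ :=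
  (p.edges.filter (fun e => c e = i)).length

section colorCount

variable {c c' : Sym2 V → ℕ} {i : ℕ} {u v w : V}

@[simp] lemma colorCount_nil : (nil : G.Walk u u).colorCount c i = 0 := rfl

lemma colorCount_cons (h : G.Adj u v) (p : G.Walk v w) :
    (cons h p).colorCount c i = (if c s(u, v) = i then 1 else 0) + p.colorCount c i := by
  by_cases hc : c s(u, v) = i <;> simp [colorCount, hc, Nat.add_comm]

@[simp] lemma colorCount_append (p : G.Walk u v) (q : G.Walk v w) :
    (p.append q).colorCount c i = p.colorCount c i + q.colorCount c i := by
  simp [colorCount, List.filter_append]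

@[simp] lemma colorCount_reverse (p : G.Walk u v) :
    p.reverse.colorCount c i = p.colorCount c i := by
  simp [colorCount, List.filter_reverse]

lemma colorCount_congr {p : G.Walk u v} (h : ∀ e ∈ p.edges, c e = c' e) :
    p.colorCount c i = p.colorCount c' i := by
  unfold colorCount
  rw [List.filter_congr (fun e he => by rw [h e he])]

lemma colorCount_eq_zero {p : G.Walk u v} (h : ∀ e ∈ p.edges, c e ≠ i) :
    p.colorCount c i = 0 := by
  simpa [colorCount, List.filter_eq_nil_iff] using h

end colorCount

variable {u v w : V} {S : Set V}

lemma mem_sym2_of_mem_edges {p : G.Walk u v} (hp : ∀ x ∈ p.support, x ∈ S) {e : Sym2 V}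
    (he : e ∈ p.edges) : e ∈ S.sym2 := by
  induction e using Sym2.ind with
  | _ x y => exact ⟨hp x (p.fst_mem_support_of_mem_edges he),
      hp y (p.snd_mem_support_of_mem_edges he)⟩

lemma IsPath.append {p : G.Walk u v} {q : G.Walk v w} (hp : p.IsPath) (hq : q.IsPath)
    (h : ∀ x ∈ p.support, x ∈ q.support → x = v) : (p.append q).IsPath := by
  rw [isPath_def, support_append, List.nodup_append]
  refine ⟨hp.support_nodup, hq.support_nodup.sublist q.support.tail_sublist, ?_⟩
  rintro x hxp _ hxq rfl
  have hx := h x hxp (List.mem_of_mem_tail hxq)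
  subst hx
  have := hq.support_nodup
  rw [← cons_tail_support] at this
  exact (List.nodup_cons.mp this).1 hxq

lemma exists_append_first_mem (p : G.Walk u v) (hv : v ∈ S) :
    ∃ k ∈ S, ∃ (q : G.Walk u k) (r : G.Walk k v), p = q.append r ∧
      ∀ x ∈ q.support, x ∈ S → x = k := by
  induction p with
  | nil => exact ⟨_, hv, nil, nil, rfl, by simp⟩
  | @cons u u' v h p ih =>
    by_cases hu : u ∈ S
    · exact ⟨u, hu, nil, cons h p, rfl, by simp⟩
    · obtain ⟨k, hk, q, r, rfl, hq⟩ := ih hv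
      refine ⟨k, hk, cons h q, r, rfl, ?_⟩
      intro x hx hxS
      rw [support_cons, List.mem_cons] at hx
      rcases hx with rfl | hx
      · exact absurd hxS hu
      · exact hq x hx hxS

lemma end_mem_of_forall_adj_mem {T : Set V} (hT : ∀ x ∈ T, ∀ y ∈ S, G.Adj x y → y ∈ T)
    (p : G.Walk u v) (hp : ∀ x ∈ p.support, x ∈ S) (hu : u ∈ T) : v ∈ T := by
  induction p with
  | nil => exact hu
  | cons h p ih => exact ih (fun x hx => hp x (by simp [hx])) (hT _ hu _ (hp _ (by simp)) h)

end Walk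

def PreconnectedOn (G : SimpleGraph V) (S : Set V) : Prop :=
  ∀ u ∈ S, ∀ v ∈ S, ∃ p : G.Walk u v, ∀ x ∈ p.support, x ∈ S

def BridgelessOn (G : SimpleGraph V) (S : Set V) : Prop :=
  ∀ u ∈ S, ∀ v ∈ S, G.Adj u v →
    ∃ p : G.Walk u v, s(u, v) ∉ p.edges ∧ ∀ x ∈ p.support, x ∈ S

section PreconnectedOn

variable {S : Set V} {u v : V}

lemma PreconnectedOn.exists_isPath [DecidableEq V] (hS : G.PreconnectedOn S) (hu : u ∈ S)
    (hv : v ∈ S) : ∃ p : G.Walk u v, p.IsPath ∧ ∀ x ∈ p.support, x ∈ S := by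
  obtain ⟨p, hp⟩ := hS u hu v hv
  exact ⟨p.bypass, p.bypass_isPath, fun x hx => hp x (p.support_bypass_subset_support hx)⟩

lemma PreconnectedOn.exists_adj (hS : G.PreconnectedOn S) (hu : u ∈ S) (hv : v ∈ S)
    (huv : u ≠ v) : ∃ w ∈ S, G.Adj u w := by
  obtain ⟨p, hp⟩ := hS u hu v hv
  cases p with
  | nil => exact absurd rfl huv
  | cons h p => exact ⟨_, hp _ (by simp), h⟩

lemma Connected.preconnectedOn_univ (hG : G.Connected) : G.PreconnectedOn Set.univ :=
  fun u _ v _ => let ⟨p⟩ := hG.preconnected u v; ⟨p, fun _ _ => trivial⟩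

end PreconnectedOn

/-! ### Ears -/

def HasOnesPath (G : SimpleGraph V) (S : Set V) (c : Sym2 V → ℕ) (t : ℕ) (u v : V) : Prop :=
  ∃ p : G.Walk u v, p.IsPath ∧ (∀ x ∈ p.support, x ∈ S) ∧ p.colorCount c 1 = t

def IsZeroOneConnectedOn (G : SimpleGraph V) (S : Set V) (c : Sym2 V → ℕ) : Prop :=
  ∀ u ∈ S, ∀ v ∈ S, u ≠ v → ∀ t ≤ 1, G.HasOnesPath S c t u v

variable {S K : Set V} {c c' : Sym2 V → ℕ} {t : ℕ} {u v : V}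

lemma hasOnesPath_refl (hu : u ∈ S) : G.HasOnesPath S c 0 u u :=
  ⟨.nil, .nil, by simpa using hu, rfl⟩

lemma HasOnesPath.symm (h : G.HasOnesPath S c t u v) : G.HasOnesPath S c t v u := by
  obtain ⟨p, hp, hpS, hpc⟩ := h
  exact ⟨p.reverse, hp.reverse, by simpa using hpS, by simpa using hpc⟩

lemma HasOnesPath.mono {S' : Set V} (h : G.HasOnesPath S c t u v) (hS : S ⊆ S')
    (hc : ∀ e ∈ S.sym2, c' e = c e) : G.HasOnesPath S' c' t u v := by
  obtain ⟨p, hp, hpS, hpc⟩ := h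
  refine ⟨p, hp, fun x hx => hS (hpS x hx), ?_⟩
  rw [Walk.colorCount_congr fun e he => hc e (Walk.mem_sym2_of_mem_edges hpS he), hpc]

lemma IsZeroOneConnectedOn.hasOnesPath_zero (h : G.IsZeroOneConnectedOn S c) (hu : u ∈ S)
    (hv : v ∈ S) : G.HasOnesPath S c 0 u v := by
  obtain rfl | huv := eq_or_ne u v
  · exact hasOnesPath_refl hu
  · exact h u hu v hv huv 0 zero_le_one

/-- An ear of `K`: the path `a, w, …, k` leaves `K` at `a` and first returns to `K` at `k`;
it is closed when `k = a`. -/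
structure IsEar (G : SimpleGraph V) (K : Set V) (a w : V) {k : V} (Q : G.Walk w k) : Prop where
  adj : G.Adj a w
  left_mem : a ∈ K
  start_not_mem : w ∉ K
  end_mem : k ∈ K
  isPath : Q.IsPath
  eq_end_of_mem : ∀ x ∈ Q.support, x ∈ K → x = k
  not_mem_edges : s(a, w) ∉ Q.edges

/-- A closed ear (`k = a`) becomes a cycle whose only `1`-edge is `aw`. -/
def earColoring [DecidableEq V] (c : Sym2 V → ℕ) (a w : V) {k : V} (Q : G.Walk w k) :
    Sym2 V → ℕ :=
  fun e => if e ∈ Q.edges then 0 else if e = s(a, w) then (if k = a then 1 else 0) else c e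

lemma earColoring_le_one [DecidableEq V] (hc : ∀ e, c e ≤ 1) (a w : V) {k : V}
    (Q : G.Walk w k) (e : Sym2 V) : earColoring c a w Q e ≤ 1 := by
  unfold earColoring
  split_ifs <;> simp [hc e]

lemma colorCount_earColoring_of_edges_subset [DecidableEq V] {a w k x y : V} {Q : G.Walk w k}
    {p : G.Walk x y} (hp : p.edges ⊆ Q.edges) : p.colorCount (earColoring c a w Q) 1 = 0 :=
  Walk.colorCount_eq_zero fun e he => by simp [earColoring, hp he]

namespace IsEar

variable [DecidableEq V] {a w k : V} {Q : G.Walk w k}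

lemma earColoring_of_mem_sym2 (E : G.IsEar K a w Q) {e : Sym2 V} (he : e ∈ K.sym2) :
    earColoring c a w Q e = c e := by
  have hQ : e ∉ Q.edges := by
    induction e using Sym2.ind with
    | _ x y =>
      intro hxy
      have hx := E.eq_end_of_mem x (Q.fst_mem_support_of_mem_edges hxy) he.1
      have hy := E.eq_end_of_mem y (Q.snd_mem_support_of_mem_edges hxy) he.2
      exact (Q.adj_of_mem_edges hxy).ne (hx.trans hy.symm)
  have hbr : e ≠ s(a, w) := by
    rintro rfl
    exact E.start_not_mem he.2
  simp [earColoring, hQ, hbr]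

lemma earColoring_edge (E : G.IsEar K a w Q) :
    earColoring c a w Q s(a, w) = if k = a then 1 else 0 := by
  simp [earColoring, E.not_mem_edges]

lemma hasOnesPath_of_mem_of_not_mem (E : G.IsEar K a w Q) (hK : G.IsZeroOneConnectedOn K c)
    (hu : u ∈ K) (hvQ : v ∈ Q.support) (hv : v ∉ K) (ht : t ≤ 1) :
    G.HasOnesPath (K ∪ {x | x ∈ Q.support}) (earColoring c a w Q) t u v := by
  obtain ⟨A, B, hA, hB, hQ⟩ := E.isPath.mem_support_iff_exists_append.mp hvQ
  have hAQ : ∀ x ∈ A.support, x ∈ Q.support := fun x hx => by simp [hQ, hx]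
  have hBQ : ∀ x ∈ B.support, x ∈ Q.support := fun x hx => by simp [hQ, hx]
  have hAK : ∀ x ∈ A.support, x ∉ K := fun x hx hxK =>
    (hQ ▸ E.isPath).ne_of_mem_support_of_append (fun h => hv (h ▸ E.end_mem)) hx
      B.end_mem_support (E.eq_end_of_mem x (hAQ x hx) hxK)
  have hold : ∀ {x y s}, G.HasOnesPath K c s x y → G.HasOnesPath K (earColoring c a w Q) s x y :=
    fun h => h.mono subset_rfl fun e he => E.earColoring_of_mem_sym2 he
  have viaB : ∀ s, G.HasOnesPath K (earColoring c a w Q) s u k →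
      G.HasOnesPath (K ∪ {x | x ∈ Q.support}) (earColoring c a w Q) s u v := by
    rintro s ⟨p, hp, hpK, hpc⟩
    refine ⟨p.append B.reverse, hp.append hB.reverse fun x hx hxB => ?_, fun x hx => ?_, ?_⟩
    · exact E.eq_end_of_mem x (hBQ x (by simpa using hxB)) (hpK x hx)
    · simp only [Walk.mem_support_append_iff, Walk.support_reverse, List.mem_reverse] at hx
      exact hx.imp (hpK x) (hBQ x)
    · rw [Walk.colorCount_append, Walk.colorCount_reverse, hpc, add_eq_left]
      exact colorCount_earColoring_of_edges_subset fun e he => by simp [hQ, he]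
  have viaEdge : ∀ s, G.HasOnesPath K (earColoring c a w Q) s u a →
      G.HasOnesPath (K ∪ {x | x ∈ Q.support}) (earColoring c a w Q)
        (s + if k = a then 1 else 0) u v := by
    rintro s ⟨p, hp, hpK, hpc⟩
    refine ⟨p.append (.cons E.adj A), hp.append (hA.cons fun h => hAK a h E.left_mem) ?_, ?_, ?_⟩
    · intro x hx hxA
      rw [Walk.support_cons, List.mem_cons] at hxA
      exact hxA.resolve_right fun h => hAK x h (hpK x hx)
    · intro x hx
      simp only [Walk.mem_support_append_iff, Walk.support_cons, List.mem_cons] at hx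
      rcases hx with hx | hx | hx
      · exact Or.inl (hpK x hx)
      · exact Or.inl (hx ▸ E.left_mem)
      · exact Or.inr (hAQ x hx)
    · rw [Walk.colorCount_append, Walk.colorCount_cons, E.earColoring_edge, hpc,
        colorCount_earColoring_of_edges_subset fun e he => by simp [hQ, he]]
      by_cases hka : k = a <;> simp [hka]
  obtain rfl | rfl : t = 0 ∨ t = 1 := by omega
  · exact viaB 0 (hold (hK.hasOnesPath_zero hu E.end_mem))
  · by_cases hka : k = a
    · simpa [hka] using viaEdge 0 (hold (hK.hasOnesPath_zero hu E.left_mem))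
    · by_cases huk : u = k
      · subst huk
        simpa [hka] using viaEdge 1 (hold (hK u hu a E.left_mem hka 1 le_rfl))
      · exact viaB 1 (hold (hK u hu k E.end_mem huk 1 le_rfl))

lemma hasOnesPath_of_eq_append (E : G.IsEar K a w Q) (hK : G.IsZeroOneConnectedOn K c)
    {m m' : V} {R₁ : G.Walk w m} {R₂ : G.Walk m m'} {R₃ : G.Walk m' k}
    (hQ : Q = R₁.append (R₂.append R₃)) (hmm' : m ≠ m') (ht : t ≤ 1) :
    G.HasOnesPath (K ∪ {x | x ∈ Q.support}) (earColoring c a w Q) t m m' := by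
  subst hQ
  have h23 := E.isPath.of_append_right
  have h13 : ∀ x ∈ R₁.support, x ∉ R₃.support := by
    intro x h1 h3
    by_cases hxm : x = m
    · subst hxm
      exact h23.ne_of_mem_support_of_append hmm' R₂.start_mem_support h3 rfl
    · exact E.isPath.ne_of_mem_support_of_append hxm h1 (by simp [h3]) rfl
  have h1K : ∀ x ∈ R₁.support, x ∉ K := fun x hx hxK =>
    h13 x hx (E.eq_end_of_mem x (by simp [hx]) hxK ▸ R₃.end_mem_support)
  have h3K : ∀ x ∈ R₃.support, x ∈ K → x = k := fun x hx => E.eq_end_of_mem x (by simp [hx])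
  obtain rfl | rfl : t = 0 ∨ t = 1 := by omega
  · exact ⟨R₂, h23.of_append_left, fun x hx => Or.inr (by simp [hx]),
      colorCount_earColoring_of_edges_subset fun e he => by simp [he]⟩
  -- back along `R₁`, across `wa`, then through `K` to `k`: the single `1`-edge is `wa` when the
  -- ear is closed, and lies inside `K` otherwise
  obtain ⟨p, hp, hpK, hpc⟩ : G.HasOnesPath K (earColoring c a w (R₁.append (R₂.append R₃)))
      (if k = a then 0 else 1) a k := by
    refine HasOnesPath.mono ?_ subset_rfl fun e he => E.earColoring_of_mem_sym2 he
    split_ifs with hka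
    · exact hka ▸ hasOnesPath_refl E.end_mem
    · exact hK a E.left_mem k E.end_mem (Ne.symm hka) 1 le_rfl
  have hX : (p.append R₃.reverse).IsPath :=
    hp.append h23.of_append_right.reverse fun x hx hx3 => h3K x (by simpa using hx3) (hpK x hx)
  have hwX : w ∉ (p.append R₃.reverse).support := by
    simp only [Walk.mem_support_append_iff, Walk.support_reverse, List.mem_reverse, not_or]
    exact ⟨fun h => E.start_not_mem (hpK w h), h13 w R₁.start_mem_support⟩
  refine ⟨R₁.reverse.append (.cons E.adj.symm (p.append R₃.reverse)),
    E.isPath.of_append_left.reverse.append (hX.cons hwX) ?_, ?_, ?_⟩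
  · intro x hx1 hx
    simp only [Walk.support_reverse, List.mem_reverse] at hx1
    simp only [Walk.support_cons, List.mem_cons, Walk.mem_support_append_iff,
      Walk.support_reverse, List.mem_reverse] at hx
    rcases hx with hx | hx | hx
    · exact hx
    · exact absurd (hpK x hx) (h1K x hx1)
    · exact absurd hx (h13 x hx1)
  · intro x hx
    simp only [Walk.mem_support_append_iff, Walk.support_reverse, List.mem_reverse,
      Walk.support_cons, List.mem_cons] at hx
    rcases hx with hx | rfl | hx | hx
    · exact Or.inr (by simp [hx])
    · exact Or.inr (by simp)
    · exact Or.inl (hpK x hx)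
    · exact Or.inr (by simp [hx])
  · rw [Walk.colorCount_append, Walk.colorCount_reverse, Walk.colorCount_cons, Sym2.eq_swap,
      E.earColoring_edge, Walk.colorCount_append, Walk.colorCount_reverse, hpc,
      colorCount_earColoring_of_edges_subset (p := R₁) fun e he => by simp [he],
      colorCount_earColoring_of_edges_subset (p := R₃) fun e he => by simp [he]]
    by_cases hka : k = a <;> simp [hka]

end IsEar

theorem IsZeroOneConnectedOn.union_ear [DecidableEq V] {a w k : V} {Q : G.Walk w k}
    (hK : G.IsZeroOneConnectedOn K c) (E : G.IsEar K a w Q) :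
    G.IsZeroOneConnectedOn (K ∪ {x | x ∈ Q.support}) (earColoring c a w Q) := by
  intro u hu v hv huv t ht
  by_cases huK : u ∈ K <;> by_cases hvK : v ∈ K
  · exact (hK u huK v hvK huv t ht).mono Set.subset_union_left
      fun e he => E.earColoring_of_mem_sym2 he
  · exact E.hasOnesPath_of_mem_of_not_mem hK huK (hv.resolve_left hvK) hvK ht
  · exact (E.hasOnesPath_of_mem_of_not_mem hK hvK (hu.resolve_left huK) huK ht).symm
  obtain ⟨A, B, hAB⟩ := Walk.mem_support_iff_exists_append.mp (hu.resolve_left huK)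
  have hv' := hv.resolve_left hvK
  rw [Set.mem_ofPred_eq, hAB, Walk.mem_support_append_iff] at hv'
  rcases hv' with hv' | hv'
  · obtain ⟨A₁, A₂, rfl⟩ := Walk.mem_support_iff_exists_append.mp hv'
    exact (E.hasOnesPath_of_eq_append hK (hAB.trans (Walk.append_assoc _ _ _).symm) huv.symm
      ht).symm
  · obtain ⟨B₁, B₂, rfl⟩ := Walk.mem_support_iff_exists_append.mp hv'
    exact E.hasOnesPath_of_eq_append hK hAB huv ht

lemma exists_isEar [DecidableEq V] {H : Set V} (hconn : G.PreconnectedOn H) (hbr : G.BridgelessOn H)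
    (hKH : K ⊆ H) {v₀ v : V} (hv₀ : v₀ ∈ K) (hv : v ∈ H) (hvK : v ∉ K) :
    ∃ a w k, ∃ Q : G.Walk w k, G.IsEar K a w Q ∧ ∀ x ∈ Q.support, x ∈ H := by
  obtain ⟨p, hpH⟩ := hconn v₀ (hKH hv₀) v hv
  obtain ⟨d, hd, ha, hw⟩ := p.exists_boundary_dart K hv₀ hvK
  obtain ⟨r, hr, hrH⟩ := hbr _ (hpH _ (p.dart_snd_mem_support_of_mem_darts hd)) _
    (hpH _ (p.dart_fst_mem_support_of_mem_darts hd)) d.adj.symm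
  obtain ⟨k, hk, Q, R, hQR, hQK⟩ := r.bypass.exists_append_first_mem ha
  refine ⟨_, _, k, Q, ⟨d.adj, ha, hw, hk, (hQR ▸ r.bypass_isPath).of_append_left, hQK,
    fun h => hr ?_⟩, fun x hx => hrH x ?_⟩
  · rw [Sym2.eq_swap]
    exact r.edges_bypass_subset_edges (hQR ▸ by simp [h])
  · exact r.support_bypass_subset_support (hQR ▸ by simp [hx])

lemma IsZeroOneConnectedOn.extend [Finite V] {H : Set V} (hconn : G.PreconnectedOn H)
    (hbr : G.BridgelessOn H) (hKH : K ⊆ H) (hK₀ : K.Nonempty) (hc : ∀ e, c e ≤ 1)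
    (hK : G.IsZeroOneConnectedOn K c) :
    ∃ c' : Sym2 V → ℕ, (∀ e, c' e ≤ 1) ∧ G.IsZeroOneConnectedOn H c' := by
  classical
  induction hn : (H \ K).ncard using Nat.strong_induction_on generalizing K c with
  | _ n ih =>
  by_cases hHK : H ⊆ K
  · exact ⟨c, hc, hKH.antisymm hHK ▸ hK⟩
  obtain ⟨v, hv, hvK⟩ := Set.not_subset.mp hHK
  obtain ⟨a, w, k, Q, E, hQH⟩ := exists_isEar hconn hbr hKH hK₀.some_mem hv hvK
  have hlt : (H \ (K ∪ {x | x ∈ Q.support})).ncard < n := hn ▸ Set.ncard_lt_ncard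
    ((Set.ssubset_iff_of_subset (Set.sdiff_subset_sdiff_right Set.subset_union_left)).mpr
      ⟨w, ⟨hQH w Q.start_mem_support, E.start_not_mem⟩, fun h => h.2 (Or.inr Q.start_mem_support)⟩)
  exact ih _ hlt (Set.union_subset hKH hQH) (hK₀.mono Set.subset_union_left)
    (earColoring_le_one hc a w Q) (hK.union_ear E) rfl

theorem exists_isZeroOneConnectedOn [Finite V] {H : Set V} (hH : H.Nonempty)
    (hconn : G.PreconnectedOn H) (hbr : G.BridgelessOn H) :
    ∃ c : Sym2 V → ℕ, (∀ e, c e ≤ 1) ∧ G.IsZeroOneConnectedOn H c :=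
  let ⟨v, hv⟩ := hH
  IsZeroOneConnectedOn.extend (c := fun _ => 0) hconn hbr (Set.singleton_subset_iff.mpr hv)
    (Set.singleton_nonempty v) (fun _ => zero_le_one) (by rintro u rfl w rfl h; exact absurd rfl h)

/-! ### Conflict-free colourings of induced subgraphs -/

def IsCFConnColoringOn (G : SimpleGraph V) (S : Set V) (c : Sym2 V → ℕ) : Prop :=
  ∀ u ∈ S, ∀ v ∈ S, u ≠ v → ∃ p : G.Walk u v, p.IsPath ∧ (∀ x ∈ p.support, x ∈ S) ∧
    ∃ i, p.colorCount c i = 1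

def IsCFColorableOn (G : SimpleGraph V) (S : Set V) (k : ℕ) : Prop :=
  ∃ c : Sym2 V → ℕ, (∀ e, c e < k) ∧ G.IsCFConnColoringOn S c

section IsCFColorableOn

variable {S A B : Set V} {k : ℕ}

lemma IsCFColorableOn.mono {k' : ℕ} (h : G.IsCFColorableOn S k) (hk : k ≤ k') :
    G.IsCFColorableOn S k' :=
  let ⟨c, hc, hcf⟩ := h
  ⟨c, fun e => (hc e).trans_le hk, hcf⟩

lemma IsCFConnColoringOn.congr (h : G.IsCFConnColoringOn S c) (hc : ∀ e ∈ S.sym2, c' e = c e) :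
    G.IsCFConnColoringOn S c' := by
  intro u hu v hv huv
  obtain ⟨p, hp, hpS, i, hi⟩ := h u hu v hv huv
  exact ⟨p, hp, hpS, i, by rwa [Walk.colorCount_congr fun e he =>
    hc e (Walk.mem_sym2_of_mem_edges hpS he)]⟩

lemma IsCFConnColoringOn.mono (h : G.IsCFConnColoringOn A c) (hAS : A ⊆ S) (hu : u ∈ A)
    (hv : v ∈ A) (huv : u ≠ v) : ∃ p : G.Walk u v, p.IsPath ∧ (∀ x ∈ p.support, x ∈ S) ∧
      ∃ i, p.colorCount c i = 1 :=
  let ⟨p, hp, hpA, hi⟩ := h u hu v hv huv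
  ⟨p, hp, fun x hx => hAS (hpA x hx), hi⟩

lemma IsClique.isCFColorableOn (h : G.IsClique S) : G.IsCFColorableOn S 1 :=
  ⟨fun _ => 0, fun _ => zero_lt_one, fun _ hu _ hv huv => ⟨.cons (h hu hv huv) .nil,
    by simp [huv], by simp [hu, hv], 0, by simp [Walk.colorCount_cons]⟩⟩

lemma PreconnectedOn.exists_isPath_colorCount_eq_one (hA : G.PreconnectedOn A)
    (hB : G.PreconnectedOn B) (hAB : Disjoint A B) {a b : V} (ha : a ∈ A) (hb : b ∈ B)
    (hab : G.Adj a b) (hcA : ∀ e ∈ A.sym2, c e ≠ k) (hcB : ∀ e ∈ B.sym2, c e ≠ k)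
    (hcab : c s(a, b) = k) (hu : u ∈ A) (hv : v ∈ B) :
    ∃ p : G.Walk u v, p.IsPath ∧ (∀ x ∈ p.support, x ∈ A ∪ B) ∧ p.colorCount c k = 1 := by
  classical
  obtain ⟨p, hp, hpA⟩ := hA.exists_isPath hu ha
  obtain ⟨q, hq, hqB⟩ := hB.exists_isPath hb hv
  refine ⟨p.append (.cons hab q),
    hp.append (hq.cons fun h => hAB.notMem_of_mem_left ha (hqB a h)) ?_, ?_, ?_⟩
  · intro x hx hxq
    rw [Walk.support_cons, List.mem_cons] at hxq
    exact hxq.resolve_right fun h => hAB.notMem_of_mem_left (hpA x hx) (hqB x h)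
  · intro x hx
    simp only [Walk.mem_support_append_iff, Walk.support_cons, List.mem_cons] at hx
    rcases hx with hx | hx | hx
    exacts [Or.inl (hpA x hx), Or.inl (hx ▸ ha), Or.inr (hqB x hx)]
  · rw [Walk.colorCount_append, Walk.colorCount_cons, hcab,
      Walk.colorCount_eq_zero fun e he => hcA e (Walk.mem_sym2_of_mem_edges hpA he),
      Walk.colorCount_eq_zero fun e he => hcB e (Walk.mem_sym2_of_mem_edges hqB he)]
    simp

/-- The colour `max kA kB` is unused on both sides, so it is unique on every path crossing
`ab`. -/
theorem IsCFColorableOn.union_of_adj {kA kB : ℕ} {a b : V} (hA : G.IsCFColorableOn A kA)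
    (hB : G.IsCFColorableOn B kB) (hAc : G.PreconnectedOn A) (hBc : G.PreconnectedOn B)
    (hAB : Disjoint A B) (ha : a ∈ A) (hb : b ∈ B) (hab : G.Adj a b) :
    G.IsCFColorableOn (A ∪ B) (max kA kB + 1) := by
  classical
  obtain ⟨cA, hcA, hA⟩ := hA
  obtain ⟨cB, hcB, hB⟩ := hB
  set c : Sym2 V → ℕ := fun e =>
    if e ∈ A.sym2 then cA e else if e ∈ B.sym2 then cB e else max kA kB with hc
  have hcA' : ∀ e ∈ A.sym2, c e = cA e := fun e he => if_pos he
  have hcB' : ∀ e ∈ B.sym2, c e = cB e := by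
    intro e he
    induction e using Sym2.ind with
    | _ x y => exact (if_neg fun h => hAB.notMem_of_mem_left h.1 he.1).trans (if_pos he)
  have hcab : c s(a, b) = max kA kB :=
    (if_neg fun h => hAB.notMem_of_mem_left h.2 hb).trans
      (if_neg fun h => hAB.notMem_of_mem_left ha h.1)
  have cross := fun {u v : V} (hu : u ∈ A) (hv : v ∈ B) =>
    hAc.exists_isPath_colorCount_eq_one hBc hAB ha hb hab
      (fun e he => hcA' e he ▸ ((hcA e).trans_le (le_max_left _ _)).ne)
      (fun e he => hcB' e he ▸ ((hcB e).trans_le (le_max_right _ _)).ne) hcab hu hv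
  refine ⟨c, fun e => ?_, fun u hu v hv huv => ?_⟩
  · simp only [hc]
    split_ifs
    · exact (hcA e).trans_le (by omega)
    · exact (hcB e).trans_le (by omega)
    · omega
  rcases hu with hu | hu <;> rcases hv with hv | hv
  · exact (hA.congr hcA').mono Set.subset_union_left hu hv huv
  · obtain ⟨p, hp, hpS, hpc⟩ := cross hu hv
    exact ⟨p, hp, hpS, _, hpc⟩
  · obtain ⟨p, hp, hpS, hpc⟩ := cross hv hu
    exact ⟨p.reverse, hp.reverse, by simpa using hpS, _, by simpa using hpc⟩
  · exact (hB.congr hcB').mono Set.subset_union_right hu hv huv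

end IsCFColorableOn

/-! ### Pendant vertices -/

open Classical in
/-- An edge from `x ∈ L` to a vertex outside `L` gets colour `f x`. -/
noncomputable def pendantColoring (H L : Set V) (cH : Sym2 V → ℕ) (f : V → ℕ) : Sym2 V → ℕ :=
  fun e => if e ∈ H.sym2 then cH e else
    Sym2.lift ⟨fun x y => max (L.indicator f x) (L.indicator f y), fun _ _ => max_comm _ _⟩ e

section pendantColoring

variable {H L : Set V} {cH : Sym2 V → ℕ} {f : V → ℕ} {x y : V}

lemma colorCount_pendantColoring {P : G.Walk x y} (hP : ∀ z ∈ P.support, z ∈ H) (i : ℕ) :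
    P.colorCount (pendantColoring H L cH f) i = P.colorCount cH i :=
  Walk.colorCount_congr fun _ he => if_pos (Walk.mem_sym2_of_mem_edges hP he)

lemma pendantColoring_mk (hHL : Disjoint H L) (hx : x ∈ L) (hy : y ∈ H) :
    pendantColoring H L cH f s(x, y) = f x := by
  simp [pendantColoring, hHL.notMem_of_mem_right hx, hx, hHL.notMem_of_mem_left hy]

lemma pendantColoring_lt {m : ℕ} (hcH : ∀ e, cH e ≤ 1) (hm : 2 ≤ m) (hf : ∀ x ∈ L, f x < m)
    (e : Sym2 V) : pendantColoring H L cH f e < m := by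
  induction e using Sym2.ind with
  | _ x y =>
    have := hcH s(x, y)
    simp only [pendantColoring, Sym2.lift_mk, Set.indicator]
    split_ifs with _ hx hy hy
    · omega
    · exact max_lt (hf x hx) (hf y hy)
    · exact max_lt (hf x hx) (by omega)
    · exact max_lt (by omega) (hf y hy)
    · omega

lemma colorCount_eq_zero_of_two_le (hcH : ∀ e, cH e ≤ 1) (P : G.Walk x y) {i : ℕ} (hi : 2 ≤ i) :
    P.colorCount cH i = 0 :=
  Walk.colorCount_eq_zero fun e _ => by have := hcH e; omega

/-- With `1 - f u` edges of colour `1` on the core path, colour `max (f u) 1` occurs once. -/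
lemma IsZeroOneConnectedOn.exists_path_pendant_core (hH : G.IsZeroOneConnectedOn H cH)
    (hcH : ∀ e, cH e ≤ 1) (hHL : Disjoint H L) {u p v : V} (hu : u ∈ L) (hp : p ∈ H)
    (hup : G.Adj u p) (hv : v ∈ H) : ∃ P : G.Walk u v, P.IsPath ∧ (∀ z ∈ P.support, z ∈ H ∪ L) ∧
      ∃ i, P.colorCount (pendantColoring H L cH f) i = 1 := by
  by_cases hpv : p = v
  · subst hpv
    exact ⟨.cons hup .nil, by simp [hup.ne], by simp [hu, hp], f u,
      by simp [Walk.colorCount_cons, pendantColoring_mk hHL hu hp]⟩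
  obtain ⟨P, hP, hPH, hPc⟩ := hH p hp v hv hpv (1 - f u) (by omega)
  refine ⟨.cons hup P, hP.cons fun h => hHL.notMem_of_mem_right hu (hPH u h), ?_, max (f u) 1, ?_⟩
  · intro x hx
    rw [Walk.support_cons, List.mem_cons] at hx
    exact hx.elim (fun h => Or.inr (h ▸ hu)) (fun h => Or.inl (hPH x h))
  · rw [Walk.colorCount_cons, pendantColoring_mk hHL hu hp, colorCount_pendantColoring hPH]
    rcases le_or_gt (f u) 1 with h | h
    · rw [max_eq_right h, hPc]
      split_ifs <;> omega
    · rw [max_eq_left h.le, colorCount_eq_zero_of_two_le hcH P h, if_pos rfl]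

/-- The larger pendant colour `i` occurs once: `i ≠ 0`, and a core path without `1`-edges has no
edge of colour `i`. -/
lemma IsZeroOneConnectedOn.exists_path_pendant_pendant (hH : G.IsZeroOneConnectedOn H cH)
    (hcH : ∀ e, cH e ≤ 1) (hHL : Disjoint H L) {u v p q : V} (hu : u ∈ L) (hv : v ∈ L)
    (hp : p ∈ H) (hq : q ∈ H) (hup : G.Adj u p) (hvq : G.Adj v q) (huv : u ≠ v)
    (hf : f u ≠ f v) : ∃ P : G.Walk u v, P.IsPath ∧ (∀ z ∈ P.support, z ∈ H ∪ L) ∧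
      ∃ i, P.colorCount (pendantColoring H L cH f) i = 1 := by
  obtain ⟨P, hP, hPH, hPc⟩ := hH.hasOnesPath_zero hp hq
  have hnotP : ∀ z ∈ L, z ∉ P.support := fun z hz h => hHL.notMem_of_mem_right hz (hPH z h)
  refine ⟨.cons hup (P.append (.cons hvq.symm .nil)), ?_, ?_, max (f u) (f v), ?_⟩
  · refine (hP.append (by simp [hvq.ne.symm]) ?_).cons ?_
    · intro x hx hxv
      simp only [Walk.support_cons, Walk.support_nil, List.mem_cons, List.not_mem_nil,
        or_false] at hxv
      exact hxv.resolve_right fun h => hnotP v hv (h ▸ hx)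
    · intro h
      simp only [Walk.mem_support_append_iff, Walk.support_cons, Walk.support_nil,
        List.mem_cons, List.not_mem_nil, or_false] at h
      rcases h with h | h | h
      · exact hnotP u hu h
      · exact hnotP u hu (h ▸ P.end_mem_support)
      · exact huv h
  · intro x hx
    simp only [Walk.support_cons, Walk.mem_support_append_iff, Walk.support_nil,
      List.mem_cons, List.not_mem_nil, or_false] at hx
    rcases hx with hx | hx | hx | hx
    · exact Or.inr (hx ▸ hu)
    · exact Or.inl (hPH x hx)
    · exact Or.inl (hx ▸ hq)
    · exact Or.inr (hx ▸ hv)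
  · have hPi : P.colorCount (pendantColoring H L cH f) (max (f u) (f v)) = 0 := by
      rw [colorCount_pendantColoring hPH]
      rcases le_or_gt (max (f u) (f v)) 1 with h | h
      · rwa [show max (f u) (f v) = 1 by omega]
      · exact colorCount_eq_zero_of_two_le hcH P h
    rw [Walk.colorCount_cons, Walk.colorCount_append, Walk.colorCount_cons, hPi,
      pendantColoring_mk hHL hu hp, Sym2.eq_swap, pendantColoring_mk hHL hv hq,
      Walk.colorCount_nil]
    split_ifs <;> omega

end pendantColoring

theorem IsZeroOneConnectedOn.isCFColorableOn_union [Finite V] {H L : Set V} {cH : Sym2 V → ℕ}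
    (hH : G.IsZeroOneConnectedOn H cH) (hcH : ∀ e, cH e ≤ 1) (hHL : Disjoint H L)
    (hL : ∀ x ∈ L, ∃ p ∈ H, G.Adj x p) : G.IsCFColorableOn (H ∪ L) (max 2 L.ncard) := by
  obtain ⟨f, hfinj, hflt⟩ := L.exists_injOn_lt_ncard
  refine ⟨pendantColoring H L cH f, pendantColoring_lt hcH (le_max_left _ _)
    fun x hx => (hflt x hx).trans_le (le_max_right _ _), fun u hu v hv huv => ?_⟩
  rcases hu with hu | hu <;> rcases hv with hv | hv
  · obtain ⟨P, hP, hPH, hPc⟩ := hH u hu v hv huv 1 le_rfl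
    exact ⟨P, hP, fun x hx => Or.inl (hPH x hx), 1, by rw [colorCount_pendantColoring hPH, hPc]⟩
  · obtain ⟨q, hq, hvq⟩ := hL v hv
    obtain ⟨P, hP, hPS, i, hi⟩ := hH.exists_path_pendant_core hcH hHL hv hq hvq hu
    exact ⟨P.reverse, hP.reverse, by simpa using hPS, i, by simpa using hi⟩
  · obtain ⟨p, hp, hup⟩ := hL u hu
    exact hH.exists_path_pendant_core hcH hHL hu hp hup hv
  · obtain ⟨p, hp, hup⟩ := hL u hu
    obtain ⟨q, hq, hvq⟩ := hL v hv
    exact hH.exists_path_pendant_pendant hcH hHL hu hv hp hq hup hvq huv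
      fun h => huv (hfinj hu hv h)

/-! ### Bridges -/

/-- When `b ∉ G.sideOn S a b`, the edge `ab` is a bridge of `G[S]` and `G.sideOn S a b`,
`G.sideOn S b a` are its two sides. -/
def sideOn (G : SimpleGraph V) (S : Set V) (a b : V) : Set V :=
  {x | ∃ p : G.Walk x a, s(a, b) ∉ p.edges ∧ ∀ z ∈ p.support, z ∈ S}

section sideOn

variable {S : Set V} {a b x y : V}

lemma self_mem_sideOn (ha : a ∈ S) : a ∈ G.sideOn S a b :=
  ⟨.nil, by simp, by simpa using ha⟩

lemma sideOn_subset : G.sideOn S a b ⊆ S :=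
  fun x ⟨p, _, hp⟩ => hp x p.start_mem_support

lemma mem_sideOn_of_adj (hx : x ∈ G.sideOn S a b) (hy : y ∈ S) (hyx : G.Adj y x)
    (hne : s(y, x) ≠ s(a, b)) : y ∈ G.sideOn S a b := by
  obtain ⟨p, hp, hpS⟩ := hx
  refine ⟨.cons hyx p, ?_, ?_⟩
  · simpa [Walk.edges_cons, hp] using hne.symm
  · intro z hz
    rw [Walk.support_cons, List.mem_cons] at hz
    exact hz.elim (· ▸ hy) (hpS z)

lemma mem_sideOn_of_mem_support [DecidableEq V] {p : G.Walk x a} (hp : s(a, b) ∉ p.edges)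
    (hpS : ∀ z ∈ p.support, z ∈ S) (hy : y ∈ p.support) : y ∈ G.sideOn S a b :=
  ⟨p.dropUntil y hy, fun h => hp (p.edges_dropUntil_subset_edges hy h),
    fun z hz => hpS z (p.support_dropUntil_subset_support hy hz)⟩

lemma preconnectedOn_sideOn : G.PreconnectedOn (G.sideOn S a b) := by
  classical
  rintro x ⟨p, hp, hpS⟩ y ⟨q, hq, hqS⟩
  refine ⟨p.append q.reverse, fun z hz => ?_⟩
  simp only [Walk.mem_support_append_iff, Walk.support_reverse, List.mem_reverse] at hz
  exact hz.elim (mem_sideOn_of_mem_support hp hpS) (mem_sideOn_of_mem_support hq hqS)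

lemma not_mem_sideOn_comm (hb : b ∉ G.sideOn S a b) : a ∉ G.sideOn S b a := by
  rintro ⟨p, hp, hpS⟩
  exact hb ⟨p.reverse, by simpa [Sym2.eq_swap] using hp, by simpa using hpS⟩

lemma disjoint_sideOn (hb : b ∉ G.sideOn S a b) : Disjoint (G.sideOn S a b) (G.sideOn S b a) := by
  rw [Set.disjoint_left]
  rintro x ⟨p, hp, hpS⟩ ⟨q, hq, hqS⟩
  refine hb ⟨q.reverse.append p, ?_, ?_⟩
  · rw [Sym2.eq_swap] at hq
    simp [hp, hq]
  · intro z hz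
    simp only [Walk.mem_support_append_iff, Walk.support_reverse, List.mem_reverse] at hz
    exact hz.elim (hqS z) (hpS z)

lemma sideOn_union_sideOn (hS : G.PreconnectedOn S) (ha : a ∈ S) (hb : b ∈ S) :
    G.sideOn S a b ∪ G.sideOn S b a = S := by
  refine (Set.union_subset sideOn_subset sideOn_subset).antisymm fun x hx => ?_
  obtain ⟨p, hp⟩ := hS a ha x hx
  refine p.end_mem_of_forall_adj_mem (fun y hy z hz hyz => ?_) hp (Or.inl (self_mem_sideOn ha))
  by_cases hzab : s(z, y) = s(a, b)
  · rcases Sym2.eq_iff.mp hzab with h | h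
    · rw [h.1]
      exact Or.inl (self_mem_sideOn ha)
    · rw [h.1]
      exact Or.inr (self_mem_sideOn hb)
  · refine hy.imp (mem_sideOn_of_adj · hz hyz.symm hzab) (mem_sideOn_of_adj · hz hyz.symm ?_)
    rwa [Sym2.eq_swap (a := b)]

lemma exists_isIndepSet_card_eq_succ [DecidableEq V] (hb : b ∉ G.sideOn S a b) {I : Finset V}
    (hIS : ↑I ⊆ G.sideOn S a b) (hI : G.IsIndepSet I) (hy : y ∈ G.sideOn S b a) (hyb : y ≠ b) :
    ∃ J : Finset V, ↑J ⊆ S ∧ G.IsIndepSet ↑J ∧ J.card = I.card + 1 := by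
  have hyA : y ∉ G.sideOn S a b := (disjoint_sideOn hb).notMem_of_mem_right hy
  have hnadj : ∀ x ∈ I, ¬G.Adj y x := by
    refine fun x hx hyx => hyA (mem_sideOn_of_adj (hIS hx) (sideOn_subset hy) hyx fun h => ?_)
    rcases Sym2.eq_iff.mp h with h | h
    · obtain ⟨rfl, -⟩ := h
      exact (disjoint_sideOn hb).notMem_of_mem_left (self_mem_sideOn (sideOn_subset hy)) hy
    · exact hyb h.1
  refine ⟨insert y I, ?_, ?_, Finset.card_insert_of_notMem fun h => hyA (hIS h)⟩
  · rw [Finset.coe_insert]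
    exact Set.insert_subset (sideOn_subset hy) (hIS.trans sideOn_subset)
  · rw [Finset.coe_insert]
    exact hI.insert fun x hx _ => ⟨hnadj x hx, fun h => hnadj x hx h.symm⟩

theorem PreconnectedOn.exists_isCFColorableOn_of_bridge [DecidableEq V] (hS : G.PreconnectedOn S)
    (ha : a ∈ S) (hb : b ∈ S) (hab : G.Adj a b) (hbA : b ∉ G.sideOn S a b)
    (hx : x ∈ G.sideOn S a b) (hxa : x ≠ a) (hy : y ∈ G.sideOn S b a) (hyb : y ≠ b)
    {IA IB : Finset V} (hIA : ↑IA ⊆ G.sideOn S a b) (hIAind : G.IsIndepSet ↑IA)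
    (hA : G.IsCFColorableOn (G.sideOn S a b) IA.card) (hIB : ↑IB ⊆ G.sideOn S b a)
    (hIBind : G.IsIndepSet ↑IB) (hB : G.IsCFColorableOn (G.sideOn S b a) IB.card) :
    ∃ I : Finset V, ↑I ⊆ S ∧ G.IsIndepSet ↑I ∧ G.IsCFColorableOn S I.card := by
  have hcol := hA.union_of_adj hB preconnectedOn_sideOn preconnectedOn_sideOn
    (disjoint_sideOn hbA) (self_mem_sideOn ha) (self_mem_sideOn hb) hab
  rw [sideOn_union_sideOn hS ha hb] at hcol
  obtain ⟨JA, hJA, hJAind, hJAcard⟩ := exists_isIndepSet_card_eq_succ hbA hIA hIAind hy hyb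
  obtain ⟨JB, hJB, hJBind, hJBcard⟩ :=
    exists_isIndepSet_card_eq_succ (not_mem_sideOn_comm hbA) hIB hIBind hx hxa
  rcases le_total IB.card IA.card with h | h
  · exact ⟨JA, hJA, hJAind, hcol.mono (by omega)⟩
  · exact ⟨JB, hJB, hJBind, hcol.mono (by omega)⟩

end sideOn

/-! ### Leaves and the bridgeless core -/

def innerOn (G : SimpleGraph V) (S : Set V) : Set V :=
  {x ∈ S | ∃ y ∈ S, ∃ z ∈ S, y ≠ z ∧ G.Adj x y ∧ G.Adj x z}

section innerOn

variable {S : Set V} {x : V}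

lemma innerOn_subset : G.innerOn S ⊆ S := fun _ hx => hx.1

lemma exists_adj_ne_of_mem_innerOn (hx : x ∈ G.innerOn S) (y : V) :
    ∃ z ∈ S, z ≠ y ∧ G.Adj x z := by
  obtain ⟨-, z₁, hz₁, z₂, hz₂, hne, h₁, h₂⟩ := hx
  by_cases h : z₁ = y
  · exact ⟨z₂, hz₂, h ▸ hne.symm, h₂⟩
  · exact ⟨z₁, hz₁, h, h₁⟩

lemma exists_ne_mem_sideOn_of_mem_innerOn (hx : x ∈ G.innerOn S) (y : V) :
    ∃ z ∈ G.sideOn S x y, z ≠ x := by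
  obtain ⟨z, hz, hzy, hxz⟩ := exists_adj_ne_of_mem_innerOn hx y
  refine ⟨z, mem_sideOn_of_adj (self_mem_sideOn hx.1) hz hxz.symm fun h => hzy ?_, hxz.ne.symm⟩
  rcases Sym2.eq_iff.mp h with h | h
  exacts [(hxz.ne h.1.symm).elim, h.1]

lemma Walk.IsPath.forall_mem_innerOn {p : G.Walk u v} (hp : p.IsPath)
    (hpS : ∀ y ∈ p.support, y ∈ S) (hu : u ∈ G.innerOn S) (hv : v ∈ G.innerOn S) :
    ∀ x ∈ p.support, x ∈ G.innerOn S := by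
  intro x hx
  obtain rfl | hxu := eq_or_ne x u
  · exact hu
  obtain rfl | hxv := eq_or_ne x v
  · exact hv
  obtain ⟨q, r, -, -, rfl⟩ := hp.mem_support_iff_exists_append.mp hx
  have hq : ¬q.Nil := Walk.not_nil_of_ne hxu.symm
  have hr : ¬r.Nil := Walk.not_nil_of_ne hxv
  have hq' : q.penultimate ∈ q.support := q.getVert_mem_support _
  have hr' : r.snd ∈ r.support := r.getVert_mem_support _
  exact ⟨hpS x hx, q.penultimate, hpS _ (by simp [hq']), r.snd, hpS _ (by simp [hr']),
    hp.ne_of_mem_support_of_append (r.adj_snd hr).ne.symm hq' hr', (q.adj_penultimate hq).symm,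
    r.adj_snd hr⟩

/-- Adjacent leaves `x, y` would make `{x, y}` all of `S`, which contains the non-adjacent
`u₀ ≠ v₀`. -/
lemma PreconnectedOn.not_adj_of_not_mem_innerOn (hS : G.PreconnectedOn S) {u₀ v₀ y : V}
    (hu₀ : u₀ ∈ S) (hv₀ : v₀ ∈ S) (hne : u₀ ≠ v₀) (hnadj : ¬G.Adj u₀ v₀) (hx : x ∈ S)
    (hxH : x ∉ G.innerOn S) (hy : y ∈ S) (hyH : y ∉ G.innerOn S) : ¬G.Adj x y := by
  intro hxy
  have uniq : ∀ {a b}, a ∈ S → a ∉ G.innerOn S → b ∈ S → G.Adj a b → ∀ z ∈ S, G.Adj a z →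
      z = b := fun {a b} ha haH hb hab z hz haz =>
    by_contra fun h => haH ⟨ha, z, hz, b, hb, h, haz, hab⟩
  have hT : ∀ a ∈ ({x, y} : Set V), ∀ z ∈ S, G.Adj a z → z ∈ ({x, y} : Set V) := by
    rintro a (rfl | rfl) z hz haz
    · exact Or.inr (uniq hx hxH hy hxy z hz haz)
    · exact Or.inl (uniq hy hyH hx hxy.symm z hz haz)
  have hmem : ∀ w ∈ S, w ∈ ({x, y} : Set V) := fun w hw =>
    let ⟨p, hp⟩ := hS x hx w hw
    p.end_mem_of_forall_adj_mem hT hp (Or.inl rfl)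
  rcases hmem u₀ hu₀ with rfl | rfl <;> rcases hmem v₀ hv₀ with rfl | rfl
  exacts [hne rfl, hnadj hxy, hnadj hxy.symm, hne rfl]

lemma PreconnectedOn.innerOn (hS : G.PreconnectedOn S) : G.PreconnectedOn (G.innerOn S) := by
  classical
  intro x hx y hy
  obtain ⟨p, hp, hpS⟩ := hS.exists_isPath hx.1 hy.1
  exact ⟨p, hp.forall_mem_innerOn hpS hx hy⟩

def PendantBridgesOn (G : SimpleGraph V) (S : Set V) : Prop :=
  ∀ a ∈ S, ∀ b ∈ S, G.Adj a b → b ∉ G.sideOn S a b → (∃ x ∈ G.sideOn S a b, x ≠ a) →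
    ∀ y ∈ G.sideOn S b a, y = b

lemma PendantBridgesOn.bridgelessOn_innerOn (hpend : G.PendantBridgesOn S) :
    G.BridgelessOn (G.innerOn S) := by
  classical
  intro x hx y hy hxy
  by_cases hyx : y ∈ G.sideOn S x y
  · obtain ⟨p, hp, hpS⟩ := hyx
    refine ⟨p.reverse.bypass, fun h => hp (by simpa using p.reverse.edges_bypass_subset_edges h),
      p.reverse.bypass_isPath.forall_mem_innerOn (fun z hz => ?_) hx hy⟩
    exact hpS z (by simpa using p.reverse.support_bypass_subset_support hz)
  · obtain ⟨z, hz, hzy⟩ := exists_ne_mem_sideOn_of_mem_innerOn hy x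
    exact (hzy (hpend x hx.1 y hy.1 hxy hyx (exists_ne_mem_sideOn_of_mem_innerOn hx y) z hz)).elim

end innerOn

theorem PreconnectedOn.exists_isCFColorableOn_of_pendantBridgesOn [Finite V] {S : Set V}
    (hS : G.PreconnectedOn S) (hpend : G.PendantBridgesOn S) {u₀ v₀ : V} (hu₀ : u₀ ∈ S)
    (hv₀ : v₀ ∈ S) (hne : u₀ ≠ v₀) (hnadj : ¬G.Adj u₀ v₀) :
    ∃ I : Finset V, ↑I ⊆ S ∧ G.IsIndepSet ↑I ∧ G.IsCFColorableOn S I.card := by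
  classical
  have hleaf : ∀ {x y}, x ∈ S → x ∉ G.innerOn S → y ∈ S → y ∉ G.innerOn S → ¬G.Adj x y :=
    hS.not_adj_of_not_mem_innerOn hu₀ hv₀ hne hnadj
  have hpar : ∀ x ∈ S \ G.innerOn S, ∃ p ∈ G.innerOn S, G.Adj x p := by
    rintro x ⟨hx, hxH⟩
    obtain ⟨p, hp, hxp⟩ : ∃ p ∈ S, G.Adj x p := by
      by_cases h : x = u₀
      · exact hS.exists_adj hx hv₀ (h ▸ hne)
      · exact hS.exists_adj hx hu₀ h
    exact ⟨p, by_contra fun hpH => hleaf hx hxH hp hpH hxp, hxp⟩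
  have hHne : (G.innerOn S).Nonempty := by
    by_cases h : u₀ ∈ G.innerOn S
    · exact ⟨u₀, h⟩
    · obtain ⟨p, hp, -⟩ := hpar u₀ ⟨hu₀, h⟩
      exact ⟨p, hp⟩
  obtain ⟨cH, hcH, hHc⟩ := exists_isZeroOneConnectedOn hHne hS.innerOn hpend.bridgelessOn_innerOn
  have hcol := hHc.isCFColorableOn_union hcH Set.disjoint_sdiff_right hpar
  rw [Set.union_sdiff_cancel innerOn_subset] at hcol
  by_cases hL : 2 ≤ (S \ G.innerOn S).ncard
  · refine ⟨(S \ G.innerOn S).toFinite.toFinset, by simp, ?_, hcol.mono ?_⟩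
    · rw [Set.Finite.coe_toFinset]
      exact fun x hx y hy _ => hleaf hx.1 hx.2 hy.1 hy.2
    · rw [← Set.ncard_eq_toFinset_card]
      omega
  · refine ⟨{u₀, v₀}, by simp [Set.insert_subset_iff, hu₀, hv₀], ?_, hcol.mono ?_⟩
    · rw [Finset.coe_pair]
      exact Set.pairwise_pair.mpr fun _ => ⟨hnadj, fun h => hnadj h.symm⟩
    · rw [Finset.card_pair hne]
      omega

/-! ### The main induction -/

theorem PreconnectedOn.exists_isCFColorableOn [Finite V] {S : Set V} (hS : G.PreconnectedOn S)
    (hne : S.Nonempty) :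
    ∃ I : Finset V, ↑I ⊆ S ∧ G.IsIndepSet ↑I ∧ G.IsCFColorableOn S I.card := by
  classical
  induction hn : S.ncard using Nat.strong_induction_on generalizing S with
  | _ n ih =>
  by_cases hcl : G.IsClique S
  · obtain ⟨x, hx⟩ := hne
    exact ⟨{x}, by simpa using hx, by simp, by simpa using hcl.isCFColorableOn⟩
  obtain ⟨u₀, hu₀, v₀, hv₀, hne', hnadj⟩ : ∃ u₀ ∈ S, ∃ v₀ ∈ S, u₀ ≠ v₀ ∧ ¬G.Adj u₀ v₀ := by
    simpa [IsClique, Set.Pairwise] using hcl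
  by_cases hbr : ∃ a ∈ S, ∃ b ∈ S, G.Adj a b ∧ b ∉ G.sideOn S a b ∧
      (∃ x ∈ G.sideOn S a b, x ≠ a) ∧ ∃ y ∈ G.sideOn S b a, y ≠ b
  swap
  · push Not at hbr
    exact hS.exists_isCFColorableOn_of_pendantBridgesOn hbr hu₀ hv₀ hne' hnadj
  obtain ⟨a, ha, b, hb, hab, hbA, ⟨x, hx, hxa⟩, y, hy, hyb⟩ := hbr
  have hlt : ∀ {c d}, d ∈ S → d ∉ G.sideOn S c d → (G.sideOn S c d).ncard < n := fun hd hdc =>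
    hn ▸ Set.ncard_lt_ncard ((Set.ssubset_iff_of_subset sideOn_subset).mpr ⟨_, hd, hdc⟩)
  obtain ⟨IA, hIA, hIAind, hA⟩ :=
    ih _ (hlt hb hbA) preconnectedOn_sideOn ⟨a, self_mem_sideOn ha⟩ rfl
  obtain ⟨IB, hIB, hIBind, hB⟩ :=
    ih _ (hlt ha (not_mem_sideOn_comm hbA)) preconnectedOn_sideOn ⟨b, self_mem_sideOn hb⟩ rfl
  exact hS.exists_isCFColorableOn_of_bridge ha hb hab hbA hx hxa hy hyb hIA hIAind hA hIB hIBind hB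

lemma Connected.indepNum_le_card_sub_one [Fintype V] (hG : G.Connected)
    (hn : 2 ≤ Fintype.card V) : G.indepNum ≤ Fintype.card V - 1 := by
  obtain ⟨s, hs⟩ := G.exists_isNIndepSet_indepNum
  obtain ⟨u, v, huv⟩ := Fintype.exists_pair_of_one_lt_card hn
  obtain ⟨w, -, huw⟩ := hG.preconnectedOn_univ.exists_adj trivial trivial huv
  have hs' : s ≠ Finset.univ := fun h => hs.isIndepSet (by simp [h]) (by simp [h]) huw.ne huw
  have := Finset.card_lt_card (Finset.ssubset_univ_iff.mpr hs')
  rw [Finset.card_univ, hs.card_eq] at this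
  omega

lemma IsCFConnColoringOn.isCFConnColoring {c : Sym2 V → ℕ}
    (h : G.IsCFConnColoringOn Set.univ c) : IsCFConnColoring G c := fun u v huv => by
  obtain ⟨p, hp, -, hi⟩ := h u trivial v trivial huv
  exact ⟨p, hp, hi⟩

lemma IsCFColorableOn.cfcNum_le {k : ℕ} (h : G.IsCFColorableOn Set.univ k) : cfcNum G ≤ k :=
  let ⟨c, hc, hcf⟩ := h
  Nat.sInf_le ⟨c, hc, hcf.isCFConnColoring⟩

lemma IsCFColorableOn.one_le_cfcNum [Nonempty V] {k : ℕ} (h : G.IsCFColorableOn Set.univ k) :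
    1 ≤ cfcNum G :=
  let ⟨c, hc, hcf⟩ := h
  le_csInf ⟨k, c, hc, hcf.isCFConnColoring⟩ fun _ ⟨_, hc', _⟩ =>
    Nat.one_le_of_lt (hc' s(Classical.arbitrary V, Classical.arbitrary V))

end SimpleGraph

lemma indepNum_eq_simpleGraph_indepNum {V : Type*} [Fintype V] (G : SimpleGraph V) :
    _root_.indepNum G = G.indepNum := by
  simp only [_root_.indepNum, SimpleGraph.indepNum, SimpleGraph.isNIndepSet_iff]

theorem stmt0 {V : Type*} [Fintype V] (G : SimpleGraph V) (hG : G.Connected)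
    (hn : 2 ≤ Fintype.card V) :
    1 ≤ cfcNum G ∧ cfcNum G ≤ _root_.indepNum G ∧ _root_.indepNum G ≤ Fintype.card V - 1 := by
  have : Nonempty V := Fintype.card_pos_iff.mp (by omega)
  obtain ⟨I, -, hI, hcol⟩ := hG.preconnectedOn_univ.exists_isCFColorableOn Set.univ_nonempty
  rw [indepNum_eq_simpleGraph_indepNum]
  have hα := hcol.mono hI.card_le_indepNum
  exact ⟨hα.one_le_cfcNum, hα.cfcNum_le, hG.indepNum_le_card_sub_one hn⟩
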